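/- For all integers n, m ≥ 1, the domination polynomial of the n×m rook graph satisfies D_{R_{n,m}}(x) = ((1+x)^n − 1)^m + ((1+x)^m − 1)^n − (−1)^{n+m} Σ_{ℓ=0}^{n} Σ_{k=0}^{m} C(n,ℓ) C(m,k) (−1)^{k+ℓ} (1+x)^{kℓ} as an identity in the polynomial ring ℤ[x]. -/

import Mathlib

open Finset Polynomial

/-- The `n × m` rook graph: vertices are squares `(a,b)`; two distinct squares are
adjacent iff they share a row or a column. -/
def rookGraph (n m : ℕ) : SimpleGraph (Fin n × Fin m) where
  Adj v w := v ≠ w ∧ (v.1 = w.1 ∨ v.2 = w.2)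
  symm := by
    constructor
    rintro v w ⟨h1, h2⟩
    exact ⟨h1.symm, h2.imp Eq.symm Eq.symm⟩
  loopless := by
    constructor
    rintro v ⟨h1, _⟩
    exact h1 rfl

/-- `S` is a dominating set of the `n × m` rook graph. -/
def IsDomSet (n m : ℕ) (S : Finset (Fin n × Fin m)) : Prop :=
  ∀ v, v ∈ S ∨ ∃ u ∈ S, (rookGraph n m).Adj u v

/-- `domCount n m k` is the number of dominating sets of cardinality `k`
of the `n × m` rook graph. -/
noncomputable def domCount (n m k : ℕ) : ℕ :=
  Set.ncard {S : Finset (Fin n × Fin m) | S.card = k ∧ IsDomSet n m S}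

/-- `ECount n m k` is the number of `k`-element subsets of `{1,…,n} × {1,…,m}`
that meet every row and every column. -/
noncomputable def ECount (n m k : ℕ) : ℕ :=
  Set.ncard {T : Finset (Fin n × Fin m) | T.card = k ∧
    (∀ r : Fin n, ∃ c : Fin m, (r, c) ∈ T) ∧ (∀ c : Fin m, ∃ r : Fin n, (r, c) ∈ T)}

/-- The domination polynomial of the `n × m` rook graph, as a polynomial over `ℤ`. -/
noncomputable def domPoly (n m : ℕ) : Polynomial ℤ :=
  ∑ k ∈ Finset.range (n * m + 1), Polynomial.C (domCount n m k : ℤ) * Polynomial.X ^ k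

/-
A set of squares dominates the rook graph iff it meets every row or meets every column, so by
inclusion–exclusion the domination polynomial is the sum of the generating functions of the sets
meeting every row and of those meeting every column, minus that of the sets meeting both.
All three come from one Möbius inversion: the sets `S ⊆ A ×ˢ B` contribute `(1 + x) ^ (#A * #B)`,
and summing `(-1) ^ #Aᶜ` over the row sets `A` containing the rows of `S` detects that `S` meets
every row (likewise for columns). For rows alone this gives
`∑ A, (-1) ^ #Aᶜ * ((1 + x) ^ m) ^ #A = ((1 + x) ^ m - 1) ^ n`.
-/
section

variable {α β R : Type*} [DecidableEq α] [DecidableEq β] [CommRing R]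

lemma image_fst_subset_and_image_snd_subset_iff {S : Finset (α × β)} {A : Finset α}
    {B : Finset β} : S.image Prod.fst ⊆ A ∧ S.image Prod.snd ⊆ B ↔ S ⊆ A ×ˢ B :=
  ⟨fun h => subset_product.trans (product_subset_product h.1 h.2), fun h =>
    ⟨(image_subset_image h).trans subset_product_image_fst,
      (image_subset_image h).trans subset_product_image_snd⟩⟩

lemma sum_powerset_pow_card {ι : Type*} (s : Finset ι) (x : R) :
    ∑ t ∈ s.powerset, x ^ #t = (1 + x) ^ #s := by
  simpa [add_comm] using sum_pow_mul_eq_add_pow x 1 s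

lemma neg_one_pow_sub_of_le {n l : ℕ} (h : l ≤ n) :
    (-1 : R) ^ (n - l) = (-1) ^ n * (-1) ^ l := by
  obtain ⟨d, rfl⟩ := Nat.exists_eq_add_of_le h
  rw [Nat.add_sub_cancel_left, pow_add, mul_comm ((-1 : R) ^ l), mul_assoc, ← mul_pow, neg_one_mul,
    neg_neg, one_pow, mul_one]

variable [Fintype α] [Fintype β]

lemma sum_filter_superset_neg_one_pow_card_compl (T : Finset α) :
    ∑ A : Finset α with T ⊆ A, (-1 : R) ^ #Aᶜ = if T = univ then 1 else 0 := by
  have hcompl : ∑ A : Finset α with T ⊆ A, (-1 : R) ^ #Aᶜ = ∑ C ∈ Tᶜ.powerset, (-1 : R) ^ #C :=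
    sum_nbij' compl compl (by simp) (by simp [subset_compl_comm]) (by simp) (by simp) (by simp)
  have := congrArg (Int.cast : ℤ → R) (sum_powerset_neg_one_pow_card (x := Tᶜ))
  push_cast at this
  simpa [hcompl] using this

lemma sum_pow_card_mul_sum_superset_images (x : R) (u : Finset α → R) (v : Finset β → R) :
    ∑ S : Finset (α × β), x ^ #S * (∑ A with S.image Prod.fst ⊆ A, u A) *
        (∑ B with S.image Prod.snd ⊆ B, v B) =
      ∑ A, ∑ B, u A * v B * (1 + x) ^ (#A * #B) :=
  calc _ = ∑ S : Finset (α × β), ∑ A, ∑ B, if S ⊆ A ×ˢ B then u A * v B * x ^ #S else 0 := by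
        refine sum_congr rfl fun S _ => ?_
        simp_rw [sum_filter, mul_sum, sum_mul, ← image_fst_subset_and_image_snd_subset_iff,
          ite_and]
        rw [sum_comm]
        refine sum_congr rfl fun A _ => sum_congr rfl fun B _ => ?_
        split_ifs <;> ring
    _ = ∑ A, ∑ B, u A * v B * (1 + x) ^ (#A * #B) := by
        rw [sum_comm]
        refine sum_congr rfl fun A _ => ?_
        rw [sum_comm]
        refine sum_congr rfl fun B _ => ?_
        rw [← card_product, ← sum_powerset_pow_card, mul_sum, ← sum_filter]
        exact sum_congr (by ext; simp) fun _ _ => rfl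

lemma sum_neg_one_pow_card_compl_mul_pow (c : R) :
    ∑ A : Finset α, (-1 : R) ^ #Aᶜ * c ^ #A = (c - 1) ^ Fintype.card α := by
  simpa [card_compl, mul_comm, sub_eq_add_neg] using Fintype.sum_pow_mul_eq_add_pow α c (-1)

lemma sum_pow_card_filter_image_fst_eq_univ (x : R) :
    ∑ S : Finset (α × β) with S.image Prod.fst = univ, x ^ #S =
      ((1 + x) ^ Fintype.card β - 1) ^ Fintype.card α := by
  have h := sum_pow_card_mul_sum_superset_images x (fun A : Finset α => (-1 : R) ^ #Aᶜ)
    (fun B : Finset β => if B = univ then 1 else 0)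
  simp only [sum_filter_superset_neg_one_pow_card_compl, mul_ite, mul_one, mul_zero, sum_ite_eq',
    mem_filter, mem_univ, subset_univ, and_self, ↓reduceIte, pow_mul', ite_mul, zero_mul,
    card_univ] at h
  rw [sum_filter, ← sum_neg_one_pow_card_compl_mul_pow, ← h]

lemma sum_pow_card_filter_image_snd_eq_univ (x : R) :
    ∑ S : Finset (α × β) with S.image Prod.snd = univ, x ^ #S =
      ((1 + x) ^ Fintype.card α - 1) ^ Fintype.card β := by
  have h := sum_pow_card_mul_sum_superset_images x (fun A : Finset α => if A = univ then 1 else 0)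
    (fun B : Finset β => (-1 : R) ^ #Bᶜ)
  simp only [sum_ite_eq', mem_filter, mem_univ, subset_univ, and_self, ↓reduceIte, mul_one,
    sum_filter_superset_neg_one_pow_card_compl, mul_ite, mul_zero, ite_mul, one_mul, zero_mul,
    pow_mul, sum_ite_irrel, sum_const_zero, card_univ] at h
  rw [sum_filter, ← sum_neg_one_pow_card_compl_mul_pow, ← h]

lemma sum_pow_card_filter_image_fst_eq_univ_and_image_snd_eq_univ (x : R) :
    ∑ S : Finset (α × β) with S.image Prod.fst = univ ∧ S.image Prod.snd = univ, x ^ #S =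
      ∑ A : Finset α, ∑ B : Finset β, (-1 : R) ^ #Aᶜ * (-1) ^ #Bᶜ * (1 + x) ^ (#A * #B) := by
  rw [← sum_pow_card_mul_sum_superset_images, sum_filter]
  simp only [sum_filter_superset_neg_one_pow_card_compl, mul_ite, mul_one, mul_zero, ite_and]
  exact sum_congr rfl fun S _ => by split_ifs <;> rfl

lemma sum_sum_neg_one_pow_card_compl_mul_pow (c : R) :
    ∑ A : Finset α, ∑ B : Finset β, (-1 : R) ^ #Aᶜ * (-1) ^ #Bᶜ * c ^ (#A * #B) =
      (-1) ^ (Fintype.card α + Fintype.card β) *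
        ∑ l ∈ range (Fintype.card α + 1), ∑ k ∈ range (Fintype.card β + 1),
          ((Fintype.card α).choose l : R) * ((Fintype.card β).choose k : R) * (-1) ^ (k + l) *
            c ^ (k * l) := by
  simp_rw [card_compl]
  rw [← powerset_univ, sum_powerset_apply_card (fun a => ∑ B : Finset β,
    (-1 : R) ^ (Fintype.card α - a) * (-1) ^ (Fintype.card β - #B) * c ^ (a * #B)), mul_sum,
    card_univ]
  refine sum_congr rfl fun l hl => ?_
  rw [← powerset_univ, sum_powerset_apply_card (fun b =>
    (-1 : R) ^ (Fintype.card α - l) * (-1) ^ (Fintype.card β - b) * c ^ (l * b)), smul_sum,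
    mul_sum, card_univ]
  refine sum_congr rfl fun k hk => ?_
  rw [neg_one_pow_sub_of_le (Nat.lt_succ_iff.mp (mem_range.mp hl)),
    neg_one_pow_sub_of_le (Nat.lt_succ_iff.mp (mem_range.mp hk)), nsmul_eq_mul, nsmul_eq_mul]
  ring

end

lemma sum_range_ncard_filter_card_mul_pow {V R : Type*} [Fintype V] [CommSemiring R]
    (p : Finset V → Prop) [DecidablePred p] {N : ℕ} (hN : Fintype.card V ≤ N) (x : R) :
    ∑ k ∈ range (N + 1), ({S : Finset V | #S = k ∧ p S}.ncard : R) * x ^ k =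
      ∑ S : Finset V with p S, x ^ #S := by
  rw [← sum_fiberwise_of_maps_to (g := card) (t := range (N + 1))
    fun S _ => mem_range.mpr (Nat.lt_succ_of_le ((card_le_univ S).trans hN))]
  refine sum_congr rfl fun k _ => ?_
  have hfiber : {S : Finset V | #S = k ∧ p S} = ↑((univ.filter p).filter (#· = k)) := by
    ext S; simp [and_comm]
  rw [hfiber, Set.ncard_coe_finset, ← nsmul_eq_mul, ← sum_const]
  exact sum_congr rfl fun S hS => by rw [(mem_filter.mp hS).2]

lemma isDomSet_iff {n m : ℕ} {S : Finset (Fin n × Fin m)} :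
    IsDomSet n m S ↔ S.image Prod.fst = univ ∨ S.image Prod.snd = univ := by
  simp only [eq_univ_iff_forall, mem_image, Prod.exists, exists_and_right, exists_eq_right]
  constructor
  · intro h
    by_contra! ⟨⟨a, ha⟩, ⟨b, hb⟩⟩
    rcases h (a, b) with hab | ⟨⟨a', b'⟩, hu, -, rfl | rfl⟩
    · exact ha b hab
    · exact ha b' hu
    · exact hb a' hu
  · rintro (h | h) ⟨a, b⟩
    · obtain ⟨b', hb'⟩ := h a
      by_cases hb : b' = b
      · exact .inl (hb ▸ hb')
      · exact .inr ⟨(a, b'), hb', by simp [rookGraph, hb]⟩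
    · obtain ⟨a', ha'⟩ := h b
      by_cases ha : a' = a
      · exact .inl (ha ▸ ha')
      · exact .inr ⟨(a', b), ha', by simp [rookGraph, ha]⟩

theorem rook_domination_polynomial_symmetric_general (n m : ℕ) :
    domPoly n m =
      ((1 + Polynomial.X) ^ n - 1) ^ m + ((1 + Polynomial.X) ^ m - 1) ^ n -
        (-1 : Polynomial ℤ) ^ (n + m) *
          ∑ l ∈ Finset.range (n + 1), ∑ k ∈ Finset.range (m + 1),
            Polynomial.C (n.choose l : ℤ) * Polynomial.C (m.choose k : ℤ) *
              (-1 : Polynomial ℤ) ^ (k + l) * (1 + Polynomial.X) ^ (k * l) := by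
  have hdom : domPoly n m = ∑ S : Finset (Fin n × Fin m) with
      S.image Prod.fst = univ ∨ S.image Prod.snd = univ, X ^ #S := by
    simpa [domPoly, domCount, isDomSet_iff] using sum_range_ncard_filter_card_mul_pow
      (fun S : Finset (Fin n × Fin m) => S.image Prod.fst = univ ∨ S.image Prod.snd = univ)
      (N := n * m) (by simp) (X : ℤ[X])
  have hunion := sum_union_inter (s₁ := {S : Finset (Fin n × Fin m) | S.image Prod.fst = univ})
    (s₂ := {S | S.image Prod.snd = univ}) (f := fun S => (X : ℤ[X]) ^ #S)
  rw [← filter_or, ← filter_and, sum_pow_card_filter_image_fst_eq_univ,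
    sum_pow_card_filter_image_snd_eq_univ,
    sum_pow_card_filter_image_fst_eq_univ_and_image_snd_eq_univ,
    sum_sum_neg_one_pow_card_compl_mul_pow] at hunion
  simp only [Fintype.card_fin] at hunion
  simp only [hdom, map_natCast]
  linear_combination hunion

/-- Corollary 5: symmetric form of the domination polynomial of the rook graph. -/
theorem rook_domination_polynomial_symmetric (n m : ℕ) (hn : 1 ≤ n) (hm : 1 ≤ m) :
    domPoly n m =
      ((1 + Polynomial.X) ^ n - 1) ^ m + ((1 + Polynomial.X) ^ m - 1) ^ n -
        (-1 : Polynomial ℤ) ^ (n + m) *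
          ∑ l ∈ Finset.range (n + 1), ∑ k ∈ Finset.range (m + 1),
            Polynomial.C (n.choose l : ℤ) * Polynomial.C (m.choose k : ℤ) *
              (-1 : Polynomial ℤ) ^ (k + l) * (1 + Polynomial.X) ^ (k * l) :=
  rook_domination_polynomial_symmetric_general n m
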